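/- Let k̃ = min{ k ∈ ℕ : s_k(a) > c - 1 }. Then t_{k̃}(a,b,c) belongs to the additive submonoid generated by { t_0(a,b,c), …, t_{k̃-1}(a,b,c) }, and consequently { t_0, …, t_{k̃-1} } is a minimal generating set of G_{a,b}(c). -/

import Mathlib

/-- `sF a k = Σ_{i=0}^{k-1} a^i` (so `sF a 0 = 0`). -/
def sF (a k : ℕ) : ℕ := ∑ i ∈ Finset.range k, a ^ i

/-- `tF a b c k = a^k * c + b * sF a k`. -/
def tF (a b c k : ℕ) : ℕ := a ^ k * c + b * sF a k

/-- A θ_{a,b}-semigroup: contains 0, closed under addition, and closed under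
`x ↦ a*x + b` on nonzero elements. -/
def IsThetaSG (a b : ℕ) (S : Set ℕ) : Prop :=
  0 ∈ S ∧ (∀ x ∈ S, ∀ y ∈ S, x + y ∈ S) ∧ ∀ y ∈ S, y ≠ 0 → a * y + b ∈ S

/-- `Gset a b c` : the smallest θ_{a,b}-semigroup containing `c`. -/
def Gset (a b c : ℕ) : Set ℕ := ⋂₀ {S : Set ℕ | IsThetaSG a b S ∧ c ∈ S}

/-- `Hmon a b c` : additive submonoid generated by the `tF a b c k`. -/
def Hmon (a b c : ℕ) : AddSubmonoid ℕ :=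
  AddSubmonoid.closure {x | ∃ k, x = tF a b c k}

/-- `{j_i}_{i=1}^k` is `a`-reduced. -/
def AReduced (a k : ℕ) (j : ℕ → ℕ) : Prop :=
  (∀ i, 1 ≤ i → i ≤ k → j i ≤ a) ∧ j k ≠ 0 ∧
  ∀ m, 1 ≤ m → m ≤ k → j m = a → ∀ i, 1 ≤ i → i < m → j i = 0


/-!
Put `w = (a - 1) c + b`. Then `t_k = c + w s_k`, so a sum of `L` of the `t_k` has the form
`c L + w S`. As `gcd (w, c) = gcd (b, c) = 1` and `s_i < c` for `i < k̃`, no `t_i` with `i < k̃` has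
such a form with `L ≥ 2`: these `t_i` are atoms, so none of them can be omitted. On the other hand
`c ≤ s_k̃ < c + w`, which makes `t_k̃ = c + w s_k̃` a nonnegative combination of `t_0 = c` and
`t_1 = c + w`. Since `t_{i+1} = a t_i + b`, the monoid generated by `t_0, …, t_{k̃-1}` is then
closed under `x ↦ a x + b`, hence equals `G_{a,b}(c)`.
-/

lemma sF_succ (a k : ℕ) : sF a (k + 1) = a * sF a k + 1 := by
  rw [sF, Finset.sum_range_succ', sF, Finset.mul_sum]
  simp [pow_succ, mul_comm]

lemma sub_one_mul_sF_add_one {a : ℕ} (ha : 0 < a) (k : ℕ) : (a - 1) * sF a k + 1 = a ^ k := by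
  obtain ⟨a, rfl⟩ : ∃ a', a = a' + 1 := ⟨a - 1, by omega⟩
  induction k with
  | zero => simp [sF]
  | succ k ih =>
    rw [sF_succ, pow_succ, ← ih, Nat.add_sub_cancel]
    ring

lemma le_sF {a : ℕ} (ha : 0 < a) (k : ℕ) : k ≤ sF a k := by
  induction k with
  | zero => simp [sF]
  | succ k ih =>
    rw [sF_succ]
    nlinarith

lemma tF_zero (a b c : ℕ) : tF a b c 0 = c := by simp [tF, sF]

lemma tF_succ (a b c k : ℕ) : tF a b c (k + 1) = a * tF a b c k + b := by
  simp only [tF, sF_succ, pow_succ]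
  ring

lemma tF_eq_add_mul_sF {a : ℕ} (b c : ℕ) (ha : 0 < a) (k : ℕ) :
    tF a b c k = c + ((a - 1) * c + b) * sF a k := by
  rw [tF, ← sub_one_mul_sF_add_one ha k]
  ring

lemma sInf_sF_spec {a b c kt : ℕ} (ha : 0 < a) (hb : 0 < b) (hc : 2 ≤ c)
    (hkt : kt = sInf {k : ℕ | c - 1 < sF a k}) :
    1 < kt ∧ c ≤ sF a kt ∧ sF a kt < c + ((a - 1) * c + b) ∧ ∀ i < kt, sF a i < c := by
  have hne : {k : ℕ | c - 1 < sF a k}.Nonempty :=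
    ⟨c, show c - 1 < sF a c by have := le_sF ha c; omega⟩
  have hmem : c - 1 < sF a kt := hkt ▸ Nat.sInf_mem hne
  have hlt : ∀ i < kt, sF a i < c := fun i hi => by
    have : ¬c - 1 < sF a i := Nat.notMem_of_lt_sInf (s := {k | c - 1 < sF a k}) (hkt ▸ hi)
    omega
  have hkt1 : 1 < kt := by
    by_contra! hkt1
    interval_cases kt <;> simp [sF] at hmem; omega
  refine ⟨hkt1, by omega, ?_, hlt⟩
  obtain ⟨k, rfl⟩ : ∃ k, kt = k + 1 := ⟨kt - 1, by omega⟩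
  have hk := hlt k (by omega)
  obtain ⟨a, rfl⟩ : ∃ a', a = a' + 1 := ⟨a - 1, by omega⟩
  rw [sF_succ, Nat.add_sub_cancel]
  nlinarith [Nat.mul_le_mul_left a hk.le]

lemma list_sum_eq_mul_length_add_mul {c w : ℕ} :
    ∀ l : List ℕ, (∀ y ∈ l, ∃ n, y = c + w * n) → ∃ S, l.sum = c * l.length + w * S
  | [], _ => ⟨0, by simp⟩
  | y :: l, hl => by
    obtain ⟨n, rfl⟩ := hl y (List.mem_cons_self ..)
    obtain ⟨S, hS⟩ :=
      list_sum_eq_mul_length_add_mul l fun z hz => hl z (List.mem_cons_of_mem _ hz)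
    exact ⟨n + S, by rw [List.sum_cons, hS, List.length_cons]; ring⟩

lemma add_mul_ne_mul_add_mul {c w d L : ℕ} (hwc : Nat.Coprime w c) (hd : d < c) (hL : 2 ≤ L)
    (S : ℕ) : c + w * d ≠ c * L + w * S := by
  intro h
  have hSd : S < d := by
    by_contra! hdS
    nlinarith [Nat.mul_le_mul_left w hdS]
  have hdiv : w * (d - S) = c * (L - 1) := by
    rw [Nat.mul_sub, Nat.mul_sub, mul_one]
    omega
  have hc : c ∣ d - S := hwc.symm.dvd_of_dvd_mul_left ⟨L - 1, hdiv⟩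
  have := Nat.le_of_dvd (by omega) hc
  omega

lemma closure_ne_closure_of_ssubset {c w : ℕ} (hwc : Nat.Coprime w c) {G T : Set ℕ}
    (hG : ∀ x ∈ G, ∃ d < c, x = c + w * d) (hT : T ⊂ G) :
    AddSubmonoid.closure T ≠ AddSubmonoid.closure G := by
  intro hTG
  obtain ⟨x, hxG, hxT⟩ := Set.exists_of_ssubset hT
  obtain ⟨d, hd, rfl⟩ := hG x hxG
  have hxT' : c + w * d ∈ AddSubmonoid.closure T := hTG ▸ AddSubmonoid.subset_closure hxG
  obtain ⟨l, hlT, hl⟩ := AddSubmonoid.exists_list_of_mem_closure hxT'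
  obtain ⟨S, hS⟩ := list_sum_eq_mul_length_add_mul l fun y hy => by
    obtain ⟨e, -, rfl⟩ := hG y (hT.subset (hlT y hy))
    exact ⟨e, rfl⟩
  match l, hlT, hl with
  | [], _, hl => simp at hl; omega
  | [y], hlT, hl => exact hxT (by simpa [← hl] using hlT)
  | y :: z :: l, _, hl => exact add_mul_ne_mul_add_mul hwc hd (by simp) S (hl ▸ hS)

lemma add_mul_mem_closure_pair {c w n : ℕ} (hc : 0 < c) (hcn : c ≤ n) (hn : n < c + w) :
    c + w * n ∈ AddSubmonoid.closure {c, c + w} := by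
  rw [AddSubmonoid.mem_closure_pair]
  have hq : 1 ≤ n / c := (Nat.one_le_div_iff hc).2 hcn
  have hw : n % c ≤ w * (n / c) := by
    have := Nat.div_add_mod n c
    have := Nat.le_mul_of_pos_right c hq
    have := Nat.le_mul_of_pos_right w hq
    omega
  refine ⟨1 + w * (n / c) - n % c, n % c, ?_⟩
  simp only [smul_eq_mul]
  conv_rhs => rw [← Nat.div_add_mod n c]
  zify [hw, show n % c ≤ 1 + w * (n / c) by omega]
  ring

section ThetaSemigroup

variable {a b c : ℕ}

lemma isThetaSG_gset : IsThetaSG a b (Gset a b c) :=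
  ⟨fun _ hS => hS.1.1, fun x hx y hy S hS => hS.1.2.1 x (hx S hS) y (hy S hS),
    fun y hy hy0 S hS => hS.1.2.2 y (hy S hS) hy0⟩

lemma self_mem_gset : c ∈ Gset a b c := fun _ hS => hS.2

lemma gset_subset {S : Set ℕ} (hS : IsThetaSG a b S) (hc : c ∈ S) : Gset a b c ⊆ S :=
  Set.sInter_subset_of_mem ⟨hS, hc⟩

lemma IsThetaSG.closure_subset {S s : Set ℕ} (hS : IsThetaSG a b S) (hs : s ⊆ S) :
    (AddSubmonoid.closure s : Set ℕ) ⊆ S := fun _ hx =>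
  AddSubmonoid.closure_induction (fun _ hy => hs hy) hS.1 (fun x y _ _ hx hy => hS.2.1 x hx y hy) hx

lemma tF_mem_gset (ha : 0 < a) (hc : 0 < c) (k : ℕ) : tF a b c k ∈ Gset a b c := by
  induction k with
  | zero => simpa [tF_zero] using self_mem_gset
  | succ k ih =>
    rw [tF_succ]
    exact isThetaSG_gset.2.2 _ ih (by unfold tF; positivity)

lemma isThetaSG_closure {s : Set ℕ} (hs : ∀ g ∈ s, a * g + b ∈ AddSubmonoid.closure s) :
    IsThetaSG a b (AddSubmonoid.closure s) := by
  refine ⟨zero_mem _, fun x hx y hy => add_mem hx hy, fun x hx => ?_⟩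
  induction hx using AddSubmonoid.closure_induction with
  | mem g hg => exact fun _ => hs g hg
  | zero => exact fun h => absurd rfl h
  | add x y _ hy ihx ihy =>
    intro hxy
    obtain rfl | hx0 := eq_or_ne x 0
    · rw [zero_add] at hxy ⊢
      exact ihy hxy
    have hay : a * y ∈ AddSubmonoid.closure s := by simpa using nsmul_mem hy a
    simpa [mul_add, add_right_comm] using add_mem (ihx hx0) hay

lemma closure_eq_gset {s : Set ℕ} (hsG : s ⊆ Gset a b c) (hcs : c ∈ s)
    (hs : ∀ g ∈ s, a * g + b ∈ AddSubmonoid.closure s) :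
    (AddSubmonoid.closure s : Set ℕ) = Gset a b c :=
  (isThetaSG_gset.closure_subset hsG).antisymm
    (gset_subset (isThetaSG_closure hs) (AddSubmonoid.subset_closure hcs))

end ThetaSemigroup

theorem stmt8 (a b c : ℕ) (ha : 0 < a) (hb : 0 < b) (hc : 2 ≤ c)
    (hcop : Nat.gcd b c = 1) (kt : ℕ) (hkt : kt = sInf {k : ℕ | c - 1 < sF a k}) :
    tF a b c kt ∈ AddSubmonoid.closure {x | ∃ i < kt, x = tF a b c i} ∧
    (AddSubmonoid.closure {x | ∃ i < kt, x = tF a b c i} : Set ℕ) = Gset a b c ∧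
    ∀ T ⊂ {x | ∃ i < kt, x = tF a b c i},
      (AddSubmonoid.closure T : Set ℕ) ≠ Gset a b c := by
  set gens := {x | ∃ i < kt, x = tF a b c i}
  obtain ⟨hkt1, hc_le, hsF_lt, hlt⟩ := sInf_sF_spec ha hb hc hkt
  have h0 : c ∈ gens := ⟨0, by omega, (tF_zero a b c).symm⟩
  have h1 : c + ((a - 1) * c + b) ∈ gens := ⟨1, hkt1, by simp [tF_eq_add_mul_sF b c ha, sF]⟩
  have hkt_mem : tF a b c kt ∈ AddSubmonoid.closure gens := by
    rw [tF_eq_add_mul_sF b c ha]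
    refine AddSubmonoid.closure_mono ?_ (add_mul_mem_closure_pair (by omega) hc_le hsF_lt)
    exact Set.insert_subset h0 (Set.singleton_subset_iff.2 h1)
  have hgens : (AddSubmonoid.closure gens : Set ℕ) = Gset a b c := by
    refine closure_eq_gset (by rintro _ ⟨i, -, rfl⟩; exact tF_mem_gset ha (by omega) i) h0 ?_
    rintro _ ⟨i, hi, rfl⟩
    rw [← tF_succ]
    obtain hi' | rfl := Nat.lt_or_eq_of_le (Nat.succ_le_of_lt hi)
    · exact AddSubmonoid.subset_closure ⟨i + 1, hi', rfl⟩
    · exact hkt_mem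
  have hcop' : Nat.Coprime ((a - 1) * c + b) c := by
    rwa [add_comm, Nat.coprime_add_mul_right_left]
  refine ⟨hkt_mem, hgens, fun T hT h => closure_ne_closure_of_ssubset hcop' ?_ hT ?_⟩
  · rintro _ ⟨i, hi, rfl⟩
    exact ⟨sF a i, hlt i hi, tF_eq_add_mul_sF b c ha i⟩
  · exact SetLike.coe_injective (h.trans hgens.symm)
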